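/- Define a monotone drawing sequence of length n to be a sequence over the alphabet {+, 0, -, *} of one of two forms: (i) some *'s, then a 0, then a (possibly empty) block of symbols from {+,-}, then a 0, then some *'s; or (ii) a (possibly empty) block of symbols from {+,-}, then a 0, then some *'s. Order the symbols by - < 0 < + with * incomparable. Two sequences (aᵢ), (bᵢ) cross t times if there exist indices i₀ < i₁ < ... < i_t such that the comparisons strictly alternate between (aᵢ) below (bᵢ) and (aᵢ) above (bᵢ). Then: for 0 ≤ k < n, any set A of distinct monotone drawing sequences of length n, each pair of which crosses at most k times, satisfies |A| ≤ 2·binom(2n, k+1). -/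

import Mathlib

/-- The alphabet `{+, 0, -, *}` for monotone drawing sequences. -/
inductive MSym : Type
  | plus : MSym
  | zero : MSym
  | minus : MSym
  | star : MSym
deriving DecidableEq

instance instFintypeMSym : Fintype MSym :=
  ⟨{MSym.plus, MSym.zero, MSym.minus, MSym.star}, fun x => by cases x <;> simp⟩

/-- The strict partial order `- < 0 < +` with `*` incomparable to everything. -/
def MSym.lt : MSym → MSym → Prop
  | MSym.minus, MSym.zero => True
  | MSym.minus, MSym.plus => True
  | MSym.zero, MSym.plus => True
  | _, _ => False

/-- A *monotone drawing sequence* of length `n`: either (i) some `*`'s, then a `0`, then a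
(possibly empty) block of symbols from `{+,-}`, then a `0`, then some `*`'s; or (ii) a
(possibly empty) block of symbols from `{+,-}`, then a `0`, then some `*`'s. -/
def IsMDS {n : ℕ} (s : Fin n → MSym) : Prop :=
  (∃ p q : Fin n, p < q ∧ s p = MSym.zero ∧ s q = MSym.zero ∧
    (∀ l, l < p → s l = MSym.star) ∧
    (∀ l, p < l → l < q → s l = MSym.plus ∨ s l = MSym.minus) ∧
    (∀ l, q < l → s l = MSym.star)) ∨
  (∃ p : Fin n, s p = MSym.zero ∧
    (∀ l, l < p → s l = MSym.plus ∨ s l = MSym.minus) ∧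
    (∀ l, p < l → s l = MSym.star))

/-- `f` picks out indices at which the below/above relations between `a` and `b` strictly
alternate (starting either below or above). -/
def AltOn {n m : ℕ} (a b : Fin n → MSym) (f : Fin m → Fin n) : Prop :=
  (∀ i : Fin m, if i.val % 2 = 0 then MSym.lt (a (f i)) (b (f i))
    else MSym.lt (b (f i)) (a (f i))) ∨
  (∀ i : Fin m, if i.val % 2 = 0 then MSym.lt (b (f i)) (a (f i))
    else MSym.lt (a (f i)) (b (f i)))

/-- `a` and `b` cross at most `k` times: there are no `k + 2` indices at which the
below/above relations strictly alternate. -/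
def CrossAtMost {n : ℕ} (a b : Fin n → MSym) (k : ℕ) : Prop :=
  ∀ f : Fin (k + 2) → Fin n, StrictMono f → ¬ AltOn a b f

namespace MDSAux

lemma exists_zero {n : ℕ} {s : Fin n → MSym} (h : IsMDS s) : ∃ i, s i = MSym.zero := by
  rcases h with ⟨p, q, _, h1, _⟩ | ⟨p, h1, _⟩ <;> exact ⟨p, h1⟩

lemma not_mds_cons_star {m : ℕ} {x : MSym} (hx : x ≠ MSym.zero) :
    ¬ IsMDS (Fin.cons x (fun _ : Fin m => MSym.star)) := by
  intro h
  obtain ⟨i, hi⟩ := exists_zero h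
  rcases Fin.eq_zero_or_eq_succ i with rfl | ⟨j, rfl⟩
  · rw [Fin.cons_zero] at hi; exact hx hi
  · rw [Fin.cons_succ] at hi; exact MSym.noConfusion hi

/-- Tail of an MDS is an MDS or all stars. -/
lemma tail_mds {m : ℕ} {s : Fin (m+1) → MSym} (h : IsMDS s) :
    IsMDS (Fin.tail s) ∨ Fin.tail s = fun _ => MSym.star := by
  rcases h with ⟨p, q, hpq, hzp, hzq, hst1, hw, hst2⟩ | ⟨p, hzp, hw, hst⟩
  · have hq0 : q ≠ 0 := by
      intro hq
      rw [hq] at hpq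
      exact absurd hpq (Fin.not_lt_zero _)
    have hqv : q.val ≠ 0 := by intro h; exact hq0 (Fin.ext (by simp [h]))
    by_cases hp : p = 0
    · subst hp
      left; right
      refine ⟨q.pred hq0, ?_, ?_, ?_⟩
      · show s ((q.pred hq0).succ) = MSym.zero
        rw [Fin.succ_pred]; exact hzq
      · intro l hl
        show s l.succ = MSym.plus ∨ s l.succ = MSym.minus
        refine hw l.succ (Fin.succ_pos l) ?_
        rw [Fin.lt_def] at hl ⊢
        rw [Fin.coe_pred] at hl
        rw [Fin.val_succ]
        omega
      · intro l hl
        show s l.succ = MSym.star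
        refine hst2 l.succ ?_
        rw [Fin.lt_def] at hl ⊢
        rw [Fin.coe_pred] at hl
        rw [Fin.val_succ]
        omega
    · have hpv : p.val ≠ 0 := by intro h; exact hp (Fin.ext (by simp [h]))
      left; left
      refine ⟨p.pred hp, q.pred hq0, ?_, ?_, ?_, ?_, ?_, ?_⟩
      · rw [Fin.lt_def, Fin.coe_pred, Fin.coe_pred]
        rw [Fin.lt_def] at hpq
        omega
      · show s ((p.pred hp).succ) = MSym.zero
        rw [Fin.succ_pred]; exact hzp
      · show s ((q.pred hq0).succ) = MSym.zero
        rw [Fin.succ_pred]; exact hzq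
      · intro l hl
        show s l.succ = MSym.star
        refine hst1 l.succ ?_
        rw [Fin.lt_def] at hl ⊢
        rw [Fin.coe_pred] at hl
        rw [Fin.val_succ]
        omega
      · intro l hl1 hl2
        show s l.succ = MSym.plus ∨ s l.succ = MSym.minus
        refine hw l.succ ?_ ?_
        · rw [Fin.lt_def] at hl1 ⊢
          rw [Fin.coe_pred] at hl1
          rw [Fin.val_succ]
          omega
        · rw [Fin.lt_def] at hl2 ⊢
          rw [Fin.coe_pred] at hl2
          rw [Fin.val_succ]
          omega
      · intro l hl
        show s l.succ = MSym.star
        refine hst2 l.succ ?_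
        rw [Fin.lt_def] at hl ⊢
        rw [Fin.coe_pred] at hl
        rw [Fin.val_succ]
        omega
  · by_cases hp : p = 0
    · subst hp
      right
      funext j
      show s j.succ = MSym.star
      exact hst j.succ (Fin.succ_pos j)
    · have hpv : p.val ≠ 0 := by intro h; exact hp (Fin.ext (by simp [h]))
      left; right
      refine ⟨p.pred hp, ?_, ?_, ?_⟩
      · show s ((p.pred hp).succ) = MSym.zero
        rw [Fin.succ_pred]; exact hzp
      · intro l hl
        show s l.succ = MSym.plus ∨ s l.succ = MSym.minus
        refine hw l.succ ?_
        rw [Fin.lt_def] at hl ⊢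
        rw [Fin.coe_pred] at hl
        rw [Fin.val_succ]
        omega
      · intro l hl
        show s l.succ = MSym.star
        refine hst l.succ ?_
        rw [Fin.lt_def] at hl ⊢
        rw [Fin.coe_pred] at hl
        rw [Fin.val_succ]
        omega

/-- Exclusion: a star head and a non-star head cannot both give MDS. -/
lemma star_excl {m : ℕ} {t : Fin m → MSym} {x : MSym}
    (h1 : IsMDS (Fin.cons MSym.star t)) (h2 : IsMDS (Fin.cons x t)) : x = MSym.star := by
  by_contra hx
  have hagree : ∀ i : Fin (m+1), i ≠ 0 → (Fin.cons x t : Fin (m+1) → MSym) i = (Fin.cons MSym.star t : Fin (m+1) → MSym) i := by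
    intro i hi
    rcases Fin.eq_zero_or_eq_succ i with rfl | ⟨j, rfl⟩
    · exact absurd rfl hi
    · rw [@Fin.cons_succ m (fun _ => MSym) x t j, @Fin.cons_succ m (fun _ => MSym) MSym.star t j]
  rcases h1 with ⟨p, q, hpq, hzp, hzq, hst1, hw, hst2⟩ | ⟨p, hzp, hw, hst⟩
  · have hp0 : p ≠ 0 := by
      intro h
      rw [h, Fin.cons_zero] at hzp
      exact MSym.noConfusion hzp
    have hq0 : q ≠ 0 := by
      intro h
      rw [h] at hpq
      exact absurd hpq (Fin.not_lt_zero _)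
    have hzp' : (Fin.cons x t : Fin (m+1) → MSym) p = MSym.zero := by rw [hagree p hp0]; exact hzp
    have hzq' : (Fin.cons x t : Fin (m+1) → MSym) q = MSym.zero := by rw [hagree q hq0]; exact hzq
    rcases h2 with ⟨r, w, hrw, hz1, hz2, ha, hb, hc⟩ | ⟨r, hz, hb, hc⟩
    · have hr0 : r = 0 := by
        by_contra hr
        have h0 := ha 0 (Fin.pos_of_ne_zero hr)
        rw [Fin.cons_zero] at h0
        exact hx h0
      have hpw : p = w := by
        rcases lt_trichotomy p w with h | h | h
        · have := hb p (by rw [hr0]; exact Fin.pos_of_ne_zero hp0) h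
          rw [hzp'] at this
          rcases this with h' | h' <;> exact MSym.noConfusion h'
        · exact h
        · have := hc p h
          rw [hzp'] at this
          exact MSym.noConfusion this
      have hqw : q = w := by
        rcases lt_trichotomy q w with h | h | h
        · have := hb q (by rw [hr0]; exact Fin.pos_of_ne_zero hq0) h
          rw [hzq'] at this
          rcases this with h' | h' <;> exact MSym.noConfusion h'
        · exact h
        · have := hc q h
          rw [hzq'] at this
          exact MSym.noConfusion this
      rw [hpw, ← hqw] at hpq
      exact absurd hpq (lt_irrefl _)
    · have hpr : p = r := by
        rcases lt_trichotomy p r with h | h | h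
        · have := hb p h
          rw [hzp'] at this
          rcases this with h' | h' <;> exact MSym.noConfusion h'
        · exact h
        · have := hc p h
          rw [hzp'] at this
          exact MSym.noConfusion this
      have hqr : q = r := by
        rcases lt_trichotomy q r with h | h | h
        · have := hb q h
          rw [hzq'] at this
          rcases this with h' | h' <;> exact MSym.noConfusion h'
        · exact h
        · have := hc q h
          rw [hzq'] at this
          exact MSym.noConfusion this
      rw [hpr, ← hqr] at hpq
      exact absurd hpq (lt_irrefl _)
  · by_cases hp : p = 0
    · rw [hp, Fin.cons_zero] at hzp
      exact MSym.noConfusion hzp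
    · have := hw 0 (Fin.pos_of_ne_zero hp)
      rw [Fin.cons_zero] at this
      rcases this with h' | h' <;> exact MSym.noConfusion h'

def FormII {m : ℕ} (t : Fin m → MSym) : Prop :=
  ∃ r, t r = MSym.zero ∧ (∀ l, l < r → t l = MSym.plus ∨ t l = MSym.minus) ∧
    (∀ l, r < l → t l = MSym.star)

lemma formII_of_cons {m : ℕ} {t : Fin m → MSym} {x : MSym}
    (hx : x = MSym.plus ∨ x = MSym.minus) (h : IsMDS (Fin.cons x t)) : FormII t := by
  have hxz : x ≠ MSym.zero := by rcases hx with h' | h' <;> (subst h'; exact fun hh => MSym.noConfusion hh)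
  have hxs : x ≠ MSym.star := by rcases hx with h' | h' <;> (subst h'; exact fun hh => MSym.noConfusion hh)
  rcases h with ⟨p, q, hpq, hzp, hzq, hst1, hw, hst2⟩ | ⟨p, hzp, hw, hst⟩
  · exfalso
    by_cases hp : p = 0
    · rw [hp, Fin.cons_zero] at hzp
      exact hxz hzp
    · have := hst1 0 (Fin.pos_of_ne_zero hp)
      rw [Fin.cons_zero] at this
      exact hxs this
  · have hp : p ≠ 0 := by
      intro h
      rw [h, Fin.cons_zero] at hzp
      exact hxz hzp
    have hpv : p.val ≠ 0 := by intro h; exact hp (Fin.ext (by simp [h]))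
    refine ⟨p.pred hp, ?_, ?_, ?_⟩
    · have hcs := @Fin.cons_succ m (fun _ => MSym) x t (p.pred hp)
      rw [Fin.succ_pred] at hcs
      rw [← hcs]
      exact hzp
    · intro l hl
      rw [← @Fin.cons_succ m (fun _ => MSym) x t l]
      refine hw l.succ ?_
      rw [Fin.lt_def] at hl ⊢
      rw [Fin.coe_pred] at hl
      rw [Fin.val_succ]
      omega
    · intro l hl
      rw [← @Fin.cons_succ m (fun _ => MSym) x t l]
      refine hst l.succ ?_
      rw [Fin.lt_def] at hl ⊢
      rw [Fin.coe_pred] at hl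
      rw [Fin.val_succ]
      omega

lemma formII_compare {m : ℕ} {t u : Fin m → MSym} (ht : FormII t) (hu : FormII u)
    (hne : t ≠ u) : ∃ j, MSym.lt (t j) (u j) ∨ MSym.lt (u j) (t j) := by
  obtain ⟨r, hr0, hr1, hr2⟩ := ht
  obtain ⟨w, hw0, hw1, hw2⟩ := hu
  rcases lt_trichotomy r w with h | h | h
  · refine ⟨r, ?_⟩
    rcases hw1 r h with h' | h'
    · left; rw [hr0, h']; trivial
    · right; rw [hr0, h']; trivial
  · subst h
    obtain ⟨j, hj⟩ := Function.ne_iff.mp hne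
    rcases lt_trichotomy j r with h | h | h
    · rcases hr1 j h with h1 | h1 <;> rcases hw1 j h with h2 | h2
      · exact absurd (h1.trans h2.symm) hj
      · exact ⟨j, Or.inr (by rw [h1, h2]; trivial)⟩
      · exact ⟨j, Or.inl (by rw [h1, h2]; trivial)⟩
      · exact absurd (h1.trans h2.symm) hj
    · subst h
      exact absurd (hr0.trans hw0.symm) hj
    · exact absurd ((hr2 j h).trans (hw2 j h).symm) hj
  · refine ⟨w, ?_⟩
    rcases hr1 w h with h' | h'
    · right; rw [hw0, h']; trivial
    · left; rw [hw0, h']; trivial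

def ext0 {m L : ℕ} (g : Fin L → Fin m) : Fin (L+1) → Fin (m+1) :=
  Fin.cases 0 (fun i => (g i).succ)

lemma ext0_strictMono {m L : ℕ} {g : Fin L → Fin m} (hg : StrictMono g) :
    StrictMono (ext0 g) := by
  intro i j hij
  rcases Fin.eq_zero_or_eq_succ j with rfl | ⟨j', rfl⟩
  · exact absurd hij (Fin.not_lt_zero _)
  · rcases Fin.eq_zero_or_eq_succ i with rfl | ⟨i', rfl⟩
    · simp only [ext0, Fin.cases_zero, Fin.cases_succ]
      exact Fin.succ_pos _
    · simp only [ext0, Fin.cases_succ]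
      exact Fin.succ_lt_succ_iff.mpr (hg (Fin.succ_lt_succ_iff.mp hij))

lemma alt_single {m : ℕ} {t u : Fin m → MSym} {j : Fin m}
    (h : MSym.lt (t j) (u j) ∨ MSym.lt (u j) (t j)) :
    AltOn t u (fun _ : Fin 1 => j) := by
  rcases h with h | h
  · left
    intro i
    rw [if_pos (by have := i.isLt; omega)]
    exact h
  · right
    intro i
    rw [if_pos (by have := i.isLt; omega)]
    exact h

lemma single_strictMono {m : ℕ} {j : Fin m} : StrictMono (fun _ : Fin 1 => j) := by
  intro a b hab
  exact absurd hab (by rw [Fin.lt_def]; have := a.isLt; have := b.isLt; omega)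

lemma alt_extend {m L : ℕ} {t u : Fin m → MSym} {g : Fin L → Fin m}
    (h : AltOn t u g) {x1 y1 x2 y2 : MSym}
    (hyx : MSym.lt y1 x1) (hxy : MSym.lt x2 y2) :
    AltOn (Fin.cons x1 t) (Fin.cons y1 u) (ext0 g) ∨
    AltOn (Fin.cons x2 t) (Fin.cons y2 u) (ext0 g) := by
  rcases h with h | h
  · left
    right
    intro i
    rcases Fin.eq_zero_or_eq_succ i with rfl | ⟨j, rfl⟩
    · rw [if_pos (by simp)]
      simpa only [ext0, Fin.cases_zero, Fin.cons_zero] using hyx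
    · have hj := h j
      by_cases hc : j.val % 2 = 0
      · rw [if_pos hc] at hj
        rw [if_neg (by rw [Fin.val_succ]; omega)]
        simpa only [ext0, Fin.cases_succ, Fin.cons_succ] using hj
      · rw [if_neg hc] at hj
        rw [if_pos (by rw [Fin.val_succ]; omega)]
        simpa only [ext0, Fin.cases_succ, Fin.cons_succ] using hj
  · right
    left
    intro i
    rcases Fin.eq_zero_or_eq_succ i with rfl | ⟨j, rfl⟩
    · rw [if_pos (by simp)]
      simpa only [ext0, Fin.cases_zero, Fin.cons_zero] using hxy
    · have hj := h j
      by_cases hc : j.val % 2 = 0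
      · rw [if_pos hc] at hj
        rw [if_neg (by rw [Fin.val_succ]; omega)]
        simpa only [ext0, Fin.cases_succ, Fin.cons_succ] using hj
      · rw [if_neg hc] at hj
        rw [if_pos (by rw [Fin.val_succ]; omega)]
        simpa only [ext0, Fin.cases_succ, Fin.cons_succ] using hj

lemma cross_shrink {m K : ℕ} {t u : Fin m → MSym} {x1 y1 x2 y2 : MSym}
    (hyx : MSym.lt y1 x1) (hxy : MSym.lt x2 y2)
    (h1 : CrossAtMost (Fin.cons x1 t) (Fin.cons y1 u) (K+1))
    (h2 : CrossAtMost (Fin.cons x2 t) (Fin.cons y2 u) (K+1)) :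
    CrossAtMost t u K := by
  intro f hf halt
  rcases alt_extend halt hyx hxy with h | h
  · exact h1 (ext0 f) (ext0_strictMono hf) h
  · exact h2 (ext0 f) (ext0_strictMono hf) h

lemma crossAtMost_tail {m K : ℕ} {a b : Fin (m+1) → MSym} (h : CrossAtMost a b K) :
    CrossAtMost (Fin.tail a) (Fin.tail b) K := by
  intro f hf halt
  exact h (fun i => (f i).succ) (fun i j hij => Fin.succ_lt_succ_iff.mpr (hf hij)) halt

/-- counting all MDS sequences -/
lemma enc_injOn {n : ℕ} {s s' : Fin n → MSym} (hs : IsMDS s) (hs' : IsMDS s')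
    (hz : (∃ p q : Fin n, p < q ∧ s p = MSym.zero ∧ s q = MSym.zero) ↔
          (∃ p q : Fin n, p < q ∧ s' p = MSym.zero ∧ s' q = MSym.zero))
    (hb : ∀ j, (s j = MSym.plus ∨ s j = MSym.zero) ↔ (s' j = MSym.plus ∨ s' j = MSym.zero)) :
    s = s' := by
  -- key: if a has only stars after p (where a p = 0) and a' p' = 0, then ¬ p < p'
  have key : ∀ (a a' : Fin n → MSym) (p p' : Fin n), a p = MSym.zero →
      (∀ l, p < l → a l = MSym.star) → a' p' = MSym.zero →
      (∀ j, (a j = MSym.plus ∨ a j = MSym.zero) ↔ (a' j = MSym.plus ∨ a' j = MSym.zero)) →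
      ¬ p < p' := by
    intro a a' p p' h0 hstar h0' hbits hlt
    have h1 : a p' = MSym.star := hstar p' hlt
    have h2 := (hbits p').mpr (Or.inr h0')
    rw [h1] at h2
    rcases h2 with h' | h' <;> exact MSym.noConfusion h'
  -- key2: stars before
  have key2 : ∀ (a a' : Fin n → MSym) (p p' : Fin n), a p = MSym.zero →
      (∀ l, l < p → a l = MSym.star) → a' p' = MSym.zero →
      (∀ j, (a j = MSym.plus ∨ a j = MSym.zero) ↔ (a' j = MSym.plus ∨ a' j = MSym.zero)) →
      ¬ p' < p := by
    intro a a' p p' h0 hstar h0' hbits hlt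
    have h1 : a p' = MSym.star := hstar p' hlt
    have h2 := (hbits p').mpr (Or.inr h0')
    rw [h1] at h2
    rcases h2 with h' | h' <;> exact MSym.noConfusion h'
  have hb' : ∀ j, (s' j = MSym.plus ∨ s' j = MSym.zero) ↔ (s j = MSym.plus ∨ s j = MSym.zero) :=
    fun j => (hb j).symm
  -- uniqueness of zeros in form ii
  have uniq : ∀ (v : Fin n → MSym) (p : Fin n), v p = MSym.zero →
      (∀ l, l < p → v l = MSym.plus ∨ v l = MSym.minus) →
      (∀ l, p < l → v l = MSym.star) →
      ¬ (∃ a b : Fin n, a < b ∧ v a = MSym.zero ∧ v b = MSym.zero) := by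
    rintro v p h0 h1 h2 ⟨a, b, hab, ha, hbz⟩
    have hap : a = p := by
      rcases lt_trichotomy a p with h | h | h
      · rcases h1 a h with h' | h' <;> (rw [ha] at h'; exact MSym.noConfusion h')
      · exact h
      · rw [h2 a h] at ha; exact MSym.noConfusion ha
    have hbp : b = p := by
      rcases lt_trichotomy b p with h | h | h
      · rcases h1 b h with h' | h' <;> (rw [hbz] at h'; exact MSym.noConfusion h')
      · exact h
      · rw [h2 b h] at hbz; exact MSym.noConfusion hbz
    rw [hap, ← hbp] at hab
    exact absurd hab (lt_irrefl _)
  -- bit determines sign when both are signs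
  have sign_eq : ∀ (j : Fin n),
      (s j = MSym.plus ∨ s j = MSym.minus) → (s' j = MSym.plus ∨ s' j = MSym.minus) →
      s j = s' j := by
    intro j h1 h2
    rcases h1 with h1 | h1 <;> rcases h2 with h2 | h2
    · rw [h1, h2]
    · exfalso
      have := (hb j).mp (Or.inl h1)
      rw [h2] at this
      rcases this with h' | h' <;> exact MSym.noConfusion h'
    · exfalso
      have := (hb' j).mp (Or.inl h2)
      rw [h1] at this
      rcases this with h' | h' <;> exact MSym.noConfusion h'
    · rw [h1, h2]
  rcases hs with ⟨p, q, hpq, hzp, hzq, hst1, hw, hst2⟩ | ⟨p, hzp, hw, hst⟩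
  · rcases hs' with ⟨p', q', hpq', hzp', hzq', hst1', hw', hst2'⟩ | ⟨p', hzp', hw', hst'⟩
    · -- both form i
      have hpp : p = p' :=
        le_antisymm (not_lt.mp (key2 s s' p p' hzp hst1 hzp' hb))
          (not_lt.mp (key2 s' s p' p hzp' hst1' hzp hb'))
      have hqq : q = q' :=
        le_antisymm (not_lt.mp (key s' s q' q hzq' hst2' hzq hb'))
          (not_lt.mp (key s s' q q' hzq hst2 hzq' hb))
      subst hpp; subst hqq
      funext j
      rcases lt_trichotomy j p with h | h | h
      · rw [hst1 j h, hst1' j h]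
      · rw [h, hzp, hzp']
      · rcases lt_trichotomy j q with h2 | h2 | h2
        · exact sign_eq j (hw j h h2) (hw' j h h2)
        · rw [h2, hzq, hzq']
        · rw [hst2 j h2, hst2' j h2]
    · -- s form i, s' form ii : contradiction via hz
      exact absurd (hz.mp ⟨p, q, hpq, hzp, hzq⟩) (uniq s' p' hzp' hw' hst')
  · rcases hs' with ⟨p', q', hpq', hzp', hzq', hst1', hw', hst2'⟩ | ⟨p', hzp', hw', hst'⟩
    · exact absurd (hz.mpr ⟨p', q', hpq', hzp', hzq'⟩) (uniq s p hzp hw hst)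
    · -- both form ii
      have hpp : p = p' :=
        le_antisymm (not_lt.mp (key s' s p' p hzp' hst' hzp hb'))
          (not_lt.mp (key s s' p p' hzp hst hzp' hb))
      subst hpp
      funext j
      rcases lt_trichotomy j p with h | h | h
      · exact sign_eq j (hw j h) (hw' j h)
      · rw [h, hzp, hzp']
      · rw [hst j h, hst' j h]

lemma mds_card_le {n : ℕ} (A : Finset (Fin n → MSym)) (hmds : ∀ s ∈ A, IsMDS s) :
    A.card ≤ 2 * 2 ^ n := by
  have hinj : Set.InjOn (fun s : Fin n → MSym =>
      ((decide (∃ p q : Fin n, p < q ∧ s p = MSym.zero ∧ s q = MSym.zero),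
        fun j => decide (s j = MSym.plus ∨ s j = MSym.zero)) : Bool × (Fin n → Bool))) A := by
    intro s hs s' hs' h
    rw [Prod.mk.injEq] at h
    apply enc_injOn (hmds s hs) (hmds s' hs')
    · exact decide_eq_decide.mp h.1
    · intro j; exact decide_eq_decide.mp (congrFun h.2 j)
  have hle := Finset.card_le_card_of_injOn _ (fun a _ => Finset.mem_univ _) hinj
  calc A.card ≤ (Finset.univ : Finset (Bool × (Fin n → Bool))).card := hle
    _ = Fintype.card (Bool × (Fin n → Bool)) := Finset.card_univ
    _ = 2 * 2 ^ n := by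
        rw [Fintype.card_prod, Fintype.card_bool, Fintype.card_fun, Fintype.card_bool,
          Fintype.card_fin]

lemma two_pow_le_central (n : ℕ) : 2 ^ n ≤ (2 * n).choose n := by
  have h : ∀ n, 2 ^ n ≤ Nat.centralBinom n := by
    intro n
    induction n with
    | zero => simp [Nat.centralBinom]
    | succ m ih =>
      have h1 := Nat.succ_mul_centralBinom_succ m
      have hpos := Nat.centralBinom_pos m
      have h2 : 2 * Nat.centralBinom m ≤ Nat.centralBinom (m+1) := by
        have h3 : (m+1) * (2 * Nat.centralBinom m) ≤ (m+1) * Nat.centralBinom (m+1) := by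
          rw [h1]; nlinarith
        exact Nat.le_of_mul_le_mul_left h3 (Nat.succ_pos m)
      calc 2 ^ (m+1) = 2 * 2 ^ m := by ring
        _ ≤ 2 * Nat.centralBinom m := by omega
        _ ≤ _ := h2
  have := h n
  rwa [Nat.centralBinom_eq_two_mul_choose] at this

lemma ext_card_bound {m : ℕ} (A : Finset (Fin (m+1) → MSym)) (hmds : ∀ s ∈ A, IsMDS s)
    (t : Fin m → MSym) :
    (Finset.univ.filter (fun x => Fin.cons x t ∈ A)).card ≤
      1 + (if (Fin.cons MSym.minus t ∈ A ∧
              (Fin.cons MSym.zero t ∈ A ∨ Fin.cons MSym.plus t ∈ A)) then 1 else 0)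
        + (if (Fin.cons MSym.zero t ∈ A ∧ Fin.cons MSym.plus t ∈ A) then 1 else 0) := by
  set S := Finset.univ.filter (fun x => Fin.cons x t ∈ A) with hS
  have hmem : ∀ x, x ∈ S ↔ Fin.cons x t ∈ A := by
    intro x
    rw [hS, Finset.mem_filter]
    simp
  by_cases hst : Fin.cons MSym.star t ∈ A
  · have hsub : S ⊆ {MSym.star} := by
      intro x hx
      have hxA := (hmem x).mp hx
      have := star_excl (hmds _ hst) (hmds _ hxA)
      rw [this]
      exact Finset.mem_singleton_self _
    calc S.card ≤ ({MSym.star} : Finset MSym).card := Finset.card_le_card hsub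
      _ = 1 := Finset.card_singleton _
      _ ≤ _ := by omega
  · by_cases b1 : Fin.cons MSym.minus t ∈ A <;>
    by_cases b2 : Fin.cons MSym.zero t ∈ A <;>
    by_cases b3 : Fin.cons MSym.plus t ∈ A
    · -- TTT
      have hsub : S ⊆ {MSym.minus, MSym.zero, MSym.plus} := by
        intro x hx
        have hxA := (hmem x).mp hx
        cases x <;> simp_all
      rw [if_pos ⟨b1, Or.inl b2⟩, if_pos ⟨b2, b3⟩]
      calc S.card ≤ ({MSym.minus, MSym.zero, MSym.plus} : Finset MSym).card :=
        Finset.card_le_card hsub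
        _ ≤ 3 := by decide
        _ ≤ _ := by omega
    · -- TTF
      have hsub : S ⊆ {MSym.minus, MSym.zero} := by
        intro x hx
        have hxA := (hmem x).mp hx
        cases x <;> simp_all
      rw [if_pos ⟨b1, Or.inl b2⟩, if_neg (by tauto)]
      calc S.card ≤ ({MSym.minus, MSym.zero} : Finset MSym).card := Finset.card_le_card hsub
        _ ≤ 2 := by decide
        _ ≤ _ := by omega
    · -- TFT
      have hsub : S ⊆ {MSym.minus, MSym.plus} := by
        intro x hx
        have hxA := (hmem x).mp hx
        cases x <;> simp_all
      rw [if_pos ⟨b1, Or.inr b3⟩, if_neg (by tauto)]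
      calc S.card ≤ ({MSym.minus, MSym.plus} : Finset MSym).card := Finset.card_le_card hsub
        _ ≤ 2 := by decide
        _ ≤ _ := by omega
    · -- TFF
      have hsub : S ⊆ {MSym.minus} := by
        intro x hx
        have hxA := (hmem x).mp hx
        cases x <;> simp_all
      calc S.card ≤ ({MSym.minus} : Finset MSym).card := Finset.card_le_card hsub
        _ ≤ 1 := by decide
        _ ≤ _ := by omega
    · -- FTT
      have hsub : S ⊆ {MSym.zero, MSym.plus} := by
        intro x hx
        have hxA := (hmem x).mp hx
        cases x <;> simp_all
      rw [if_neg (by tauto), if_pos ⟨b2, b3⟩]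
      calc S.card ≤ ({MSym.zero, MSym.plus} : Finset MSym).card := Finset.card_le_card hsub
        _ ≤ 2 := by decide
        _ ≤ _ := by omega
    · -- FTF
      have hsub : S ⊆ {MSym.zero} := by
        intro x hx
        have hxA := (hmem x).mp hx
        cases x <;> simp_all
      calc S.card ≤ ({MSym.zero} : Finset MSym).card := Finset.card_le_card hsub
        _ ≤ 1 := by decide
        _ ≤ _ := by omega
    · -- FFT
      have hsub : S ⊆ {MSym.plus} := by
        intro x hx
        have hxA := (hmem x).mp hx
        cases x <;> simp_all
      calc S.card ≤ ({MSym.plus} : Finset MSym).card := Finset.card_le_card hsub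
        _ ≤ 1 := by decide
        _ ≤ _ := by omega
    · -- FFF
      have hsub : S ⊆ (∅ : Finset MSym) := by
        intro x hx
        have hxA := (hmem x).mp hx
        cases x <;> simp_all
      calc S.card ≤ (∅ : Finset MSym).card := Finset.card_le_card hsub
        _ ≤ 0 := by decide
        _ ≤ _ := by omega

end MDSAux

/-- For `0 ≤ k < n`, any set `A` of distinct monotone drawing sequences
of length `n`, each pair of which crosses at most `k` times, satisfies
`|A| ≤ 2·binom(2n, k+1)`. -/
theorem monotone_drawing_sequences_bound
    (n k : ℕ) (hk : k < n) (A : Finset (Fin n → MSym))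
    (hmds : ∀ s ∈ A, IsMDS s)
    (hcross : ∀ a ∈ A, ∀ b ∈ A, CrossAtMost a b k) :
    A.card ≤ 2 * Nat.choose (2 * n) (k + 1) := by
  induction n generalizing k with
  | zero => exact absurd hk (Nat.not_lt_zero k)
  | succ m ih =>
    by_cases hkm : k = m
    · rw [hkm]
      have h1 := MDSAux.mds_card_le A hmds
      have h2 := MDSAux.two_pow_le_central (m+1)
      omega
    · have hkm' : k < m := lt_of_le_of_ne (Nat.lt_succ_iff.mp hk) hkm
      classical
      set T : Finset (Fin m → MSym) := A.image Fin.tail with hT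
      have hcard : A.card = ∑ t ∈ T, (A.filter (fun s => Fin.tail s = t)).card :=
        Finset.card_eq_sum_card_image _ _
      have hfib : ∀ t ∈ T, (A.filter (fun s => Fin.tail s = t)).card ≤
          (Finset.univ.filter (fun x => Fin.cons x t ∈ A)).card := by
        intro t _
        apply Finset.card_le_card_of_injOn (fun s => s 0)
        · intro s hs
          rw [Finset.mem_coe, Finset.mem_filter] at hs
          rw [Finset.mem_coe, Finset.mem_filter]
          refine ⟨Finset.mem_univ _, ?_⟩
          rw [← hs.2, Fin.cons_self_tail]
          exact hs.1
        · intro s hs s' hs' h0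
          rw [Finset.mem_coe, Finset.mem_filter] at hs hs'
          have h0' : s 0 = s' 0 := h0
          rw [← Fin.cons_self_tail s, ← Fin.cons_self_tail s', hs.2, hs'.2, h0']
      have hsum : A.card ≤ T.card
          + (T.filter (fun t => Fin.cons MSym.minus t ∈ A ∧
              (Fin.cons MSym.zero t ∈ A ∨ Fin.cons MSym.plus t ∈ A))).card
          + (T.filter (fun t => Fin.cons MSym.zero t ∈ A ∧ Fin.cons MSym.plus t ∈ A)).card := by
        rw [hcard]
        calc ∑ t ∈ T, (A.filter (fun s => Fin.tail s = t)).card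
            ≤ ∑ t ∈ T, (1 + (if (Fin.cons MSym.minus t ∈ A ∧
                (Fin.cons MSym.zero t ∈ A ∨ Fin.cons MSym.plus t ∈ A)) then 1 else 0)
              + (if (Fin.cons MSym.zero t ∈ A ∧ Fin.cons MSym.plus t ∈ A) then 1 else 0)) :=
              Finset.sum_le_sum (fun t ht =>
                le_trans (hfib t ht) (MDSAux.ext_card_bound A hmds t))
          _ = _ := by
              rw [Finset.sum_add_distrib, Finset.sum_add_distrib, Finset.sum_const,
                smul_eq_mul, mul_one, ← Finset.card_filter, ← Finset.card_filter]
      have hTsplit : T.card ≤ (T.filter (fun t => IsMDS t)).card + 1 := by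
        have hsub : T ⊆ (T.filter (fun t => IsMDS t)) ∪ {fun _ => MSym.star} := by
          intro t ht
          obtain ⟨s, hsA, rfl⟩ := Finset.mem_image.mp ht
          rcases MDSAux.tail_mds (hmds s hsA) with h | h
          · exact Finset.mem_union_left _ (Finset.mem_filter.mpr ⟨ht, h⟩)
          · rw [h]
            exact Finset.mem_union_right _ (Finset.mem_singleton_self _)
        calc T.card ≤ ((T.filter (fun t => IsMDS t)) ∪ {fun _ => MSym.star}).card :=
            Finset.card_le_card hsub
          _ ≤ (T.filter (fun t => IsMDS t)).card
              + ({fun _ => MSym.star} : Finset (Fin m → MSym)).card := Finset.card_union_le _ _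
          _ = (T.filter (fun t => IsMDS t)).card + 1 := by rw [Finset.card_singleton]
      have hTcard : (T.filter (fun t => IsMDS t)).card ≤ 2 * Nat.choose (2*m) (k+1) := by
        apply ih k hkm'
        · exact fun s hs => (Finset.mem_filter.mp hs).2
        · intro a ha b hb
          obtain ⟨a', ha', rfl⟩ := Finset.mem_image.mp (Finset.mem_filter.mp ha).1
          obtain ⟨b', hb', rfl⟩ := Finset.mem_image.mp (Finset.mem_filter.mp hb).1
          exact MDSAux.crossAtMost_tail (hcross a' ha' b' hb')
      rcases k with _ | k'
      · -- k = 0 : the two extra families have at most one element each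
        have hTU : (T.filter (fun t => Fin.cons MSym.minus t ∈ A ∧
            (Fin.cons MSym.zero t ∈ A ∨ Fin.cons MSym.plus t ∈ A))).card ≤ 1 := by
          rw [Finset.card_le_one]
          intro a ha b hb
          by_contra hne
          rw [Finset.mem_filter] at ha hb
          obtain ⟨haT, haM, haOr⟩ := ha
          obtain ⟨hbT, hbM, hbOr⟩ := hb
          have hfa : MDSAux.FormII a := MDSAux.formII_of_cons (Or.inr rfl) (hmds _ haM)
          have hfb : MDSAux.FormII b := MDSAux.formII_of_cons (Or.inr rfl) (hmds _ hbM)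
          obtain ⟨j, hj⟩ := MDSAux.formII_compare hfa hfb hne
          have halt := MDSAux.alt_single hj
          obtain ⟨xa, hxaA, hxalt⟩ : ∃ xa, Fin.cons xa a ∈ A ∧ MSym.lt MSym.minus xa := by
            rcases haOr with h | h
            · exact ⟨MSym.zero, h, trivial⟩
            · exact ⟨MSym.plus, h, trivial⟩
          obtain ⟨xb, hxbA, hxblt⟩ : ∃ xb, Fin.cons xb b ∈ A ∧ MSym.lt MSym.minus xb := by
            rcases hbOr with h | h
            · exact ⟨MSym.zero, h, trivial⟩
            · exact ⟨MSym.plus, h, trivial⟩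
          rcases MDSAux.alt_extend halt hxalt hxblt with h | h
          · exact hcross _ hxaA _ hbM _ (MDSAux.ext0_strictMono MDSAux.single_strictMono) h
          · exact hcross _ haM _ hxbA _ (MDSAux.ext0_strictMono MDSAux.single_strictMono) h
        have hTV : (T.filter (fun t => Fin.cons MSym.zero t ∈ A ∧
            Fin.cons MSym.plus t ∈ A)).card ≤ 1 := by
          rw [Finset.card_le_one]
          intro a ha b hb
          by_contra hne
          rw [Finset.mem_filter] at ha hb
          obtain ⟨haT, haZ, haP⟩ := ha
          obtain ⟨hbT, hbZ, hbP⟩ := hb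
          have hfa : MDSAux.FormII a := MDSAux.formII_of_cons (Or.inl rfl) (hmds _ haP)
          have hfb : MDSAux.FormII b := MDSAux.formII_of_cons (Or.inl rfl) (hmds _ hbP)
          obtain ⟨j, hj⟩ := MDSAux.formII_compare hfa hfb hne
          have halt := MDSAux.alt_single hj
          rcases MDSAux.alt_extend halt
              (show MSym.lt MSym.zero MSym.plus from trivial)
              (show MSym.lt MSym.zero MSym.plus from trivial) with h | h
          · exact hcross _ haP _ hbZ _ (MDSAux.ext0_strictMono MDSAux.single_strictMono) h
          · exact hcross _ haZ _ hbP _ (MDSAux.ext0_strictMono MDSAux.single_strictMono) h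
        have e1 : (2*(m+1)).choose (0+1) = 2*(m+1) := Nat.choose_one_right _
        have e2 : (2*m).choose (0+1) = 2*m := Nat.choose_one_right _
        omega
      · -- k = k' + 1
        have hTU : (T.filter (fun t => Fin.cons MSym.minus t ∈ A ∧
            (Fin.cons MSym.zero t ∈ A ∨ Fin.cons MSym.plus t ∈ A))).card ≤
            2 * Nat.choose (2*m) (k'+1) := by
          apply ih k' (by omega)
          · intro s hs
            rw [Finset.mem_filter] at hs
            obtain ⟨hsT, hsM, _⟩ := hs
            have hmm := hmds _ hsM
            rcases MDSAux.tail_mds hmm with h | h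
            · rwa [Fin.tail_cons] at h
            · exfalso
              rw [Fin.tail_cons] at h
              rw [h] at hmm
              exact MDSAux.not_mds_cons_star (fun hh => MSym.noConfusion hh) hmm
          · intro a ha b hb
            rw [Finset.mem_filter] at ha hb
            obtain ⟨haT, haM, haOr⟩ := ha
            obtain ⟨hbT, hbM, hbOr⟩ := hb
            obtain ⟨xa, hxaA, hxalt⟩ : ∃ xa, Fin.cons xa a ∈ A ∧ MSym.lt MSym.minus xa := by
              rcases haOr with h | h
              · exact ⟨MSym.zero, h, trivial⟩
              · exact ⟨MSym.plus, h, trivial⟩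
            obtain ⟨xb, hxbA, hxblt⟩ : ∃ xb, Fin.cons xb b ∈ A ∧ MSym.lt MSym.minus xb := by
              rcases hbOr with h | h
              · exact ⟨MSym.zero, h, trivial⟩
              · exact ⟨MSym.plus, h, trivial⟩
            exact MDSAux.cross_shrink hxalt hxblt (hcross _ hxaA _ hbM) (hcross _ haM _ hxbA)
        have hTV : (T.filter (fun t => Fin.cons MSym.zero t ∈ A ∧
            Fin.cons MSym.plus t ∈ A)).card ≤ 2 * Nat.choose (2*m) (k'+1) := by
          apply ih k' (by omega)
          · intro s hs
            rw [Finset.mem_filter] at hs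
            obtain ⟨hsT, _, hsP⟩ := hs
            have hmm := hmds _ hsP
            rcases MDSAux.tail_mds hmm with h | h
            · rwa [Fin.tail_cons] at h
            · exfalso
              rw [Fin.tail_cons] at h
              rw [h] at hmm
              exact MDSAux.not_mds_cons_star (fun hh => MSym.noConfusion hh) hmm
          · intro a ha b hb
            rw [Finset.mem_filter] at ha hb
            obtain ⟨haT, haZ, haP⟩ := ha
            obtain ⟨hbT, hbZ, hbP⟩ := hb
            exact MDSAux.cross_shrink (show MSym.lt MSym.zero MSym.plus from trivial)
              (show MSym.lt MSym.zero MSym.plus from trivial)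
              (hcross _ haP _ hbZ) (hcross _ haZ _ hbP)
        have e1 : (2*(m+1)).choose (k'+1+1) = (2*m+1).choose (k'+1) + (2*m+1).choose (k'+1+1) := by
          have h2 : 2*(m+1) = (2*m+1)+1 := by ring
          rw [h2]
          exact Nat.choose_succ_succ _ _
        have e2 : (2*m+1).choose (k'+1) = (2*m).choose k' + (2*m).choose (k'+1) :=
          Nat.choose_succ_succ _ _
        have e3 : (2*m+1).choose (k'+1+1) = (2*m).choose (k'+1) + (2*m).choose (k'+1+1) :=
          Nat.choose_succ_succ _ _
        have hpos : 0 < (2*m).choose k' := Nat.choose_pos (by omega)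
        omega
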